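/- Let φ : [0,1] → [0,1] be continuous and suppose there are points 0 = a_0 < a_1 < a_2 < ⋯ with sup_k a_k = 1 and integers 2 ≤ s_1 ≤ s_2 ≤ ⋯ such that, for every k ≥ 1, the interval I_k = [a_{k−1}, a_k] is partitioned into s_k subintervals I_k^1, …, I_k^{s_k} of equal length and φ restricted to each I_k^i is an affine bijection of I_k^i onto I_k. Then the lower metric mean dimension of ([0,1], |·|, φ) is at least liminf_{k→∞} (log s_{k−1}/log s_k) / (1 − log|I_k|/log s_k), where |I_k| = a_k − a_{k−1}. -/

import Mathlib

/-!
Keeping every other leg of the `k`-th horseshoe leaves `⌈s_k / 2⌉` inverse branches of `φ` whose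
images are at least `|I_k| / s_k` apart, so for `ε < |I_k| / s_k` the points with prescribed
itineraries of length `n` form an `(n, φ, ε)`-separated set of size `⌈s_k / 2⌉ ^ n`, whence
`sep(φ, ε) ≥ log s_k - log 2`. Since `|I_k| / s_k → 0`, a small `ε` lies in
`[|I_{k+1}| / s_{k+1}, |I_k| / s_k)` for some large `k`. Then
`|log ε| ≤ log s_{k+1} - log |I_{k+1}|`, so `sep(φ, ε) / |log ε|` is at least the `(k+1)`-st term
of the liminf, up to `log 2 / |log ε|`.
-/

open Filter Set Topology

noncomputable section

/-- `sep(n,φ,ε)`: the maximal cardinality of an `(n,φ,ε)`-separated set with respect to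
the metric `d`, where a set `A` is `(n,φ,ε)`-separated if for all distinct `x, y ∈ A`
one has `max_{0 ≤ i < n} d(φ^i x, φ^i y) > ε`. -/
def sepNum {X : Type*} (d : X → X → ℝ) (φ : X → X) (n : ℕ) (ε : ℝ) : ℕ :=
  sSup {m : ℕ | ∃ A : Finset X,
    (∀ x ∈ A, ∀ y ∈ A, x ≠ y → ∃ i < n, ε < d (φ^[i] x) (φ^[i] y)) ∧ A.card = m}

/-- `sep(φ,ε) = limsup_{n→∞} (1/n) log sep(n,φ,ε)`. -/
def sepExp {X : Type*} (d : X → X → ℝ) (φ : X → X) (ε : ℝ) : ℝ :=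
  Filter.limsup (fun n : ℕ => Real.log (sepNum d φ n ε) / n) Filter.atTop

/-- The lower metric mean dimension: `liminf_{ε→0⁺} sep(φ,ε)/|log ε|`. -/
def mdimLower {X : Type*} (d : X → X → ℝ) (φ : X → X) : ℝ :=
  Filter.liminf (fun ε : ℝ => sepExp d φ ε / |Real.log ε|) (nhdsWithin 0 (Set.Ioi 0))

/-- The upper metric mean dimension: `limsup_{ε→0⁺} sep(φ,ε)/|log ε|`. -/
def mdimUpper {X : Type*} (d : X → X → ℝ) (φ : X → X) : ℝ :=
  Filter.limsup (fun ε : ℝ => sepExp d φ ε / |Real.log ε|) (nhdsWithin 0 (Set.Ioi 0))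

/-- The metric `d(x,y) = |x - y|` on `[0,1]`. -/
def dI : unitInterval → unitInterval → ℝ := fun x y => |(x : ℝ) - (y : ℝ)|

/-- `φ` restricted to the `i`-th (0-indexed) of `s` equal-length closed subintervals of
`[u,v]` is an affine bijection onto `[u,v]`: on that subinterval `φ` is given by an affine
map `t ↦ c t + e` whose image of the subinterval is exactly `[u,v]`. -/
def AffineLeg (φ : unitInterval → unitInterval) (u v : ℝ) (s : ℕ) (i : ℕ) : Prop :=
  ∃ c e : ℝ,
    (∀ x : unitInterval,
      (x : ℝ) ∈ Set.Icc (u + (i : ℝ) * ((v - u) / (s : ℝ)))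
        (u + ((i : ℝ) + 1) * ((v - u) / (s : ℝ))) → (φ x : ℝ) = c * (x : ℝ) + e) ∧
    (fun t : ℝ => c * t + e) '' Set.Icc (u + (i : ℝ) * ((v - u) / (s : ℝ)))
        (u + ((i : ℝ) + 1) * ((v - u) / (s : ℝ))) = Set.Icc u v

section Separated

variable {X : Type*} (d : X → X → ℝ) (φ : X → X) (n : ℕ) (ε : ℝ)

def IsDynSeparated (A : Finset X) : Prop :=
  ∀ x ∈ A, ∀ y ∈ A, x ≠ y → ∃ i < n, ε < d (φ^[i] x) (φ^[i] y)

variable {d φ n ε}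

theorem card_le_sepNum {N : ℕ} (hN : ∀ A, IsDynSeparated d φ n ε A → A.card ≤ N)
    {A : Finset X} (hA : IsDynSeparated d φ n ε A) : A.card ≤ sepNum d φ n ε :=
  le_csSup ⟨N, by rintro _ ⟨B, hB, rfl⟩; exact hN B hB⟩ ⟨A, hA, rfl⟩

theorem sepNum_le {N : ℕ} (hN : ∀ A, IsDynSeparated d φ n ε A → A.card ≤ N) :
    sepNum d φ n ε ≤ N :=
  csSup_le ⟨0, ∅, by simp, rfl⟩ (by rintro _ ⟨B, hB, rfl⟩; exact hN B hB)

theorem log_sepNum_div_le {C : ℕ} (hC : ∀ n A, IsDynSeparated d φ n ε A → A.card ≤ C ^ n)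
    (n : ℕ) : Real.log (sepNum d φ n ε) / n ≤ Real.log C := by
  rcases Nat.eq_zero_or_pos (sepNum d φ n ε) with h0 | hpos
  · rw [h0, Nat.cast_zero, Real.log_zero, zero_div]
    exact Real.log_natCast_nonneg C
  rcases Nat.eq_zero_or_pos n with rfl | hn
  · simpa using Real.log_natCast_nonneg C
  rw [div_le_iff₀ (by positivity), mul_comm, ← Real.log_pow]
  exact Real.log_le_log (by positivity) (by exact_mod_cast sepNum_le (hC n))

theorem sepExp_le_log {C : ℕ} (hC : ∀ n A, IsDynSeparated d φ n ε A → A.card ≤ C ^ n) :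
    sepExp d φ ε ≤ Real.log C :=
  limsup_le_of_le (isCoboundedUnder_le_of_le atTop fun n => by positivity)
    (Eventually.of_forall (log_sepNum_div_le hC))

theorem log_le_sepExp {C M : ℕ} (hC : ∀ n A, IsDynSeparated d φ n ε A → A.card ≤ C ^ n)
    (hM : 0 < M) (hsep : ∀ n, ∃ A, IsDynSeparated d φ n ε A ∧ A.card = M ^ n) :
    Real.log M ≤ sepExp d φ ε := by
  refine le_limsup_of_frequently_le ?_ (isBoundedUnder_of ⟨_, log_sepNum_div_le hC⟩)
  refine ((eventually_gt_atTop 0).mono fun n hn => ?_).frequently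
  obtain ⟨A, hA, hcard⟩ := hsep n
  rw [le_div_iff₀ (by positivity), mul_comm, ← Real.log_pow]
  refine Real.log_le_log (by positivity) ?_
  exact_mod_cast hcard ▸ card_le_sepNum (hC n) hA

theorem sepExp_nonneg {C : ℕ} (hC : ∀ n A, IsDynSeparated d φ n ε A → A.card ≤ C ^ n) :
    0 ≤ sepExp d φ ε :=
  le_limsup_of_frequently_le (Frequently.of_forall fun n => by positivity)
    (isBoundedUnder_of ⟨_, log_sepNum_div_le hC⟩)

end Separated

section Sections

variable {X ι : Type*} [DecidableEq X] {d : X → X → ℝ} {φ : X → X} {n : ℕ} {ε : ℝ}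
  {J : Finset ι} {A : Finset X} {g : ι → X → X}

theorem IsDynSeparated.image_sections (hA : IsDynSeparated d φ n ε A)
    (hg : ∀ j ∈ J, ∀ y ∈ A, φ (g j y) = y)
    (hgap : ∀ j ∈ J, ∀ j' ∈ J, j ≠ j' → ∀ y ∈ A, ∀ y' ∈ A, ε < d (g j y) (g j' y')) :
    IsDynSeparated d φ (n + 1) ε ((J ×ˢ A).image fun p => g p.1 p.2) := by
  simp only [IsDynSeparated, Finset.mem_image, Finset.mem_product]
  rintro _ ⟨⟨j, y⟩, ⟨hj, hy⟩, rfl⟩ _ ⟨⟨j', y'⟩, ⟨hj', hy'⟩, rfl⟩ hne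
  by_cases hjj : j = j'
  · subst hjj
    obtain ⟨i, hi, hsep⟩ := hA y hy y' hy' fun h => hne (h ▸ rfl)
    refine ⟨i + 1, by omega, ?_⟩
    rwa [Function.iterate_succ_apply, Function.iterate_succ_apply, hg j hj y hy, hg j hj y' hy']
  · exact ⟨0, n.succ_pos, hgap j hj j' hj' hjj y hy y' hy'⟩

theorem card_image_sections (hdiag : ∀ x, d x x ≤ ε)
    (hg : ∀ j ∈ J, ∀ y ∈ A, φ (g j y) = y)
    (hgap : ∀ j ∈ J, ∀ j' ∈ J, j ≠ j' → ∀ y ∈ A, ∀ y' ∈ A, ε < d (g j y) (g j' y')) :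
    ((J ×ˢ A).image fun p => g p.1 p.2).card = J.card * A.card := by
  rw [Finset.card_image_of_injOn, Finset.card_product]
  rintro ⟨j, y⟩ hjy ⟨j', y'⟩ hjy' (heq : g j y = g j' y')
  obtain ⟨hj, hy⟩ := Finset.mem_product.1 hjy
  obtain ⟨hj', hy'⟩ := Finset.mem_product.1 hjy'
  obtain rfl : y = y' := by rw [← hg j hj y hy, ← hg j' hj' y' hy', heq]
  by_contra hne
  have hsep := hgap j hj j' hj' (fun h => hne (h ▸ rfl)) y hy y hy
  exact (hdiag _).not_gt (heq ▸ hsep)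

end Sections


theorem abs_sub_lt_of_natFloor_div_eq {x y ε : ℝ} (hε : 0 < ε) (hx : 0 ≤ x) (hy : 0 ≤ y)
    (h : ⌊x / ε⌋₊ = ⌊y / ε⌋₊) : |x - y| < ε := by
  have hint : ⌊x / ε⌋ = ⌊y / ε⌋ := by
    rw [← Int.natCast_floor_eq_floor (by positivity), ← Int.natCast_floor_eq_floor (by positivity),
      h]
  have := Int.abs_sub_lt_one_of_floor_eq_floor hint
  rwa [← sub_div, abs_div, abs_of_pos hε, div_lt_one hε] at this

section UnitInterval

variable {φ : unitInterval → unitInterval} {ε : ℝ}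

theorem card_le_of_isDynSeparated_dI (hε : 0 < ε) {n : ℕ} {A : Finset unitInterval}
    (hA : IsDynSeparated dI φ n ε A) : A.card ≤ (⌊1 / ε⌋₊ + 1) ^ n := by
  let code : unitInterval → Fin n → ℕ := fun x i => ⌊(φ^[i] x : ℝ) / ε⌋₊
  have hcode : ∀ x ∈ A, code x ∈ Fintype.piFinset fun _ => Finset.range (⌊1 / ε⌋₊ + 1) :=
    fun x _ => Fintype.mem_piFinset.2 fun i => Finset.mem_range_succ_iff.2 <|
      Nat.floor_le_floor (div_le_div_of_nonneg_right (φ^[i] x).2.2 hε.le)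
  have hinj : Set.InjOn code A := by
    intro x hx y hy hxy
    by_contra hne
    obtain ⟨i, hi, hsep⟩ := hA x hx y hy hne
    exact hsep.not_gt <| abs_sub_lt_of_natFloor_div_eq hε (φ^[i] x).2.1 (φ^[i] y).2.1
      (congrFun hxy ⟨i, hi⟩)
  simpa using Finset.card_le_card_of_injOn code hcode hinj

theorem sepExp_dI_nonneg (hε : 0 < ε) : 0 ≤ sepExp dI φ ε :=
  sepExp_nonneg fun _ _ => card_le_of_isDynSeparated_dI hε

theorem sepExp_dI_le (hε : 0 < ε) (hε2 : ε ≤ 1 / 2) : sepExp dI φ ε ≤ 2 * |Real.log ε| := by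
  have hcount : ((⌊1 / ε⌋₊ + 1 : ℕ) : ℝ) ≤ (ε ^ 2)⁻¹ := by
    push_cast
    have hfloor := Nat.floor_le (one_div_pos.2 hε).le
    have hsq : 1 / ε + 1 ≤ (ε ^ 2)⁻¹ := by
      rw [div_add_one hε.ne', ← one_div, div_le_div_iff₀ hε (by positivity)]
      nlinarith
    linarith
  calc sepExp dI φ ε ≤ Real.log (⌊1 / ε⌋₊ + 1 : ℕ) :=
        sepExp_le_log fun _ _ => card_le_of_isDynSeparated_dI hε
    _ ≤ Real.log ((ε ^ 2)⁻¹) := Real.log_le_log (by positivity) hcount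
    _ = 2 * |Real.log ε| := by
        rw [Real.log_inv, Real.log_pow, abs_of_neg (Real.log_neg hε (by linarith))]
        push_cast; ring

theorem le_mdimLower_dI {T b : ℝ}
    (h : ∀ c, 0 < c → c < T → ∀ᶠ t in atTop, c * t ≤ sepExp dI φ (Real.exp (-t)) + b) :
    T ≤ mdimLower dI φ := by
  have hlog : Tendsto (fun ε => -Real.log ε) (𝓝[>] 0) atTop :=
    tendsto_neg_atBot_atTop.comp Real.tendsto_log_nhdsGT_zero
  have hsmall : ∀ᶠ ε in 𝓝[>] (0 : ℝ), ε ∈ Ioo 0 (1 / 2) := Ioo_mem_nhdsGT (by norm_num)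
  have hcobdd : IsCoboundedUnder (· ≥ ·) (𝓝[>] 0) fun ε => sepExp dI φ ε / |Real.log ε| :=
    isCoboundedUnder_ge_of_eventually_le _ <| hsmall.mono fun ε hε =>
      div_le_of_le_mul₀ (abs_nonneg _) zero_le_two (sepExp_dI_le hε.1 hε.2.le)
  refine le_of_forall_lt_imp_le_of_dense fun c hc => le_liminf_of_le hcobdd ?_
  rcases le_or_gt c 0 with hc0 | hc0
  · exact hsmall.mono fun ε hε => hc0.trans (div_nonneg (sepExp_dI_nonneg hε.1) (abs_nonneg _))
  obtain ⟨c', hcc', hc'T⟩ := exists_between hc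
  have hgap : ∀ᶠ t in atTop, b ≤ (c' - c) * t :=
    (tendsto_id.const_mul_atTop (sub_pos.2 hcc')).eventually_ge_atTop b
  filter_upwards [hlog.eventually ((h c' (hc0.trans hcc') hc'T).and hgap), hsmall]
    with ε ⟨hsep, hb⟩ hε
  have hlogε : Real.log ε < 0 := Real.log_neg hε.1 (by linarith [hε.2])
  rw [neg_neg, Real.exp_log hε.1] at hsep
  rw [abs_of_neg hlogε, le_div_iff₀ (neg_pos.2 hlogε)]
  linarith

end UnitInterval

section Horseshoe

def horseshoeLeg (u v : ℝ) (s i : ℕ) : Set ℝ :=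
  Icc (u + (i : ℝ) * ((v - u) / (s : ℝ))) (u + ((i : ℝ) + 1) * ((v - u) / (s : ℝ)))

variable {φ : unitInterval → unitInterval} {u v ε : ℝ} {s : ℕ}

theorem horseshoeLeg_subset {i : ℕ} (huv : u ≤ v) (hi : i < s) :
    horseshoeLeg u v s i ⊆ Icc u v := by
  rintro x ⟨hx₁, hx₂⟩
  have hD : 0 ≤ (v - u) / s := div_nonneg (sub_nonneg.2 huv) s.cast_nonneg
  have hsD : (s : ℝ) * ((v - u) / s) = v - u :=
    mul_div_cancel₀ _ (by exact_mod_cast (Nat.zero_lt_of_lt hi).ne')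
  have his : (i : ℝ) + 1 ≤ s := by exact_mod_cast hi
  constructor <;> nlinarith

theorem div_le_abs_sub_of_mem_horseshoeLeg {i j : ℕ} {x y : ℝ} (huv : u ≤ v)
    (hij : i + 1 < j ∨ j + 1 < i) (hx : x ∈ horseshoeLeg u v s i) (hy : y ∈ horseshoeLeg u v s j) :
    (v - u) / s ≤ |x - y| := by
  have hD : 0 ≤ (v - u) / s := div_nonneg (sub_nonneg.2 huv) s.cast_nonneg
  rcases hij with hij | hij
  · have : (i : ℝ) + 2 ≤ j := by exact_mod_cast hij
    rw [abs_sub_comm]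
    exact le_abs.2 (Or.inl (by nlinarith [hx.2, hy.1]))
  · have : (j : ℝ) + 2 ≤ i := by exact_mod_cast hij
    exact le_abs.2 (Or.inl (by nlinarith [hx.1, hy.2]))

theorem AffineLeg.exists_apply_eq {i : ℕ} (h : AffineLeg φ u v s i)
    (hleg : horseshoeLeg u v s i ⊆ Icc 0 1) {y : ℝ} (hy : y ∈ Icc u v) :
    ∃ x : unitInterval, (x : ℝ) ∈ horseshoeLeg u v s i ∧ (φ x : ℝ) = y := by
  obtain ⟨c, e, hφ, himage⟩ := h
  rw [← himage] at hy
  obtain ⟨t, ht, rfl⟩ := hy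
  exact ⟨⟨t, hleg ht⟩, ht, hφ _ ht⟩

theorem exists_isDynSeparated_of_affineLegs (huv : u ≤ v) (hsub : Icc u v ⊆ Icc 0 1)
    (haff : ∀ i < s, AffineLeg φ u v s i) (hε : 0 ≤ ε) (hεs : ε < (v - u) / s) (n : ℕ) :
    ∃ A : Finset unitInterval, (∀ x ∈ A, (x : ℝ) ∈ Icc u v) ∧ IsDynSeparated dI φ n ε A ∧
      A.card = ((s + 1) / 2) ^ n := by
  classical
  set J := Finset.range ((s + 1) / 2)
  have heven : ∀ j ∈ J, 2 * j < s := fun j hj => by rw [Finset.mem_range] at hj; omega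
  have hpre : ∀ j ∈ J, ∀ y : unitInterval, (y : ℝ) ∈ Icc u v →
      ∃ x : unitInterval, (x : ℝ) ∈ horseshoeLeg u v s (2 * j) ∧ φ x = y := fun j hj y hy =>
    let ⟨x, hx, hφx⟩ := (haff _ (heven j hj)).exists_apply_eq
      ((horseshoeLeg_subset huv (heven j hj)).trans hsub) hy
    ⟨x, hx, Subtype.ext hφx⟩
  choose! g hg_mem hg using hpre
  induction n with
  | zero => exact ⟨{⟨u, hsub ⟨le_rfl, huv⟩⟩}, by simp [huv], by simp [IsDynSeparated], by simp⟩
  | succ n ih =>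
    obtain ⟨A, hAuv, hA, hcard⟩ := ih
    have hφg : ∀ j ∈ J, ∀ y ∈ A, φ (g j y) = y := fun j hj y hy => hg j hj y (hAuv y hy)
    have hgap : ∀ j ∈ J, ∀ j' ∈ J, j ≠ j' → ∀ y ∈ A, ∀ y' ∈ A, ε < dI (g j y) (g j' y') :=
      fun j hj j' hj' hjj y hy y' hy' => hεs.trans_le <|
        div_le_abs_sub_of_mem_horseshoeLeg huv (by omega) (hg_mem j hj y (hAuv y hy))
          (hg_mem j' hj' y' (hAuv y' hy'))
    refine ⟨(J ×ˢ A).image fun p => g p.1 p.2, ?_, hA.image_sections hφg hgap, ?_⟩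
    · simp only [Finset.mem_image, Finset.mem_product]
      rintro _ ⟨⟨j, y⟩, ⟨hj, hy⟩, rfl⟩
      exact horseshoeLeg_subset huv (heven j hj) (hg_mem j hj y (hAuv y hy))
    · rw [card_image_sections (fun x => by simpa [dI] using hε) hφg hgap, hcard,
        Finset.card_range, pow_succ']

theorem log_sub_log_two_le_sepExp_of_affineLegs (huv : u ≤ v) (hsub : Icc u v ⊆ Icc 0 1)
    (haff : ∀ i < s, AffineLeg φ u v s i) (hε : 0 < ε) (hεs : ε < (v - u) / s) :
    Real.log s - Real.log 2 ≤ sepExp dI φ ε := by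
  have hs : 0 < s := Nat.pos_of_ne_zero <| by rintro rfl; simp at hεs; linarith
  have hhalf : (s : ℝ) / 2 ≤ ((s + 1) / 2 : ℕ) := by
    rw [div_le_iff₀ two_pos]; exact_mod_cast (by omega : s ≤ (s + 1) / 2 * 2)
  calc Real.log s - Real.log 2 = Real.log (s / 2) := (Real.log_div (by positivity) two_ne_zero).symm
    _ ≤ Real.log ((s + 1) / 2 : ℕ) := Real.log_le_log (by positivity) hhalf
    _ ≤ sepExp dI φ ε :=
      log_le_sepExp (fun _ _ => card_le_of_isDynSeparated_dI hε) (by omega) fun n =>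
        let ⟨A, _, hA, hcard⟩ := exists_isDynSeparated_of_affineLegs huv hsub haff hε.le hεs n
        ⟨A, hA, hcard⟩

end Horseshoe

theorem le_and_tendsto_of_iSup_eq {a : ℕ → ℝ} {l : ℝ} (ha : Monotone a) (hsup : ⨆ k, a k = l)
    (hl : l ≠ 0) : (∀ k, a k ≤ l) ∧ Tendsto a atTop (𝓝 l) := by
  have hbdd : BddAbove (range a) := by
    by_contra h
    rw [Real.iSup_of_not_bddAbove h] at hsup
    exact hl hsup.symm
  exact ⟨fun k => hsup ▸ le_ciSup hbdd k, hsup ▸ tendsto_atTop_ciSup ha hbdd⟩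

theorem tendsto_neg_log_sub_pred_atTop {a : ℕ → ℝ} {l : ℝ} (hmono : StrictMono a)
    (ha : Tendsto a atTop (𝓝 l)) : Tendsto (fun k => -Real.log (a k - a (k - 1))) atTop atTop := by
  refine tendsto_neg_atBot_atTop.comp <| Real.tendsto_log_nhdsGT_zero.comp <|
    tendsto_nhdsWithin_iff.2 ⟨?_, ?_⟩
  · simpa using ha.sub (ha.comp (tendsto_sub_atTop_nat 1))
  · filter_upwards [eventually_ge_atTop 1] with k hk using sub_pos.2 (hmono (by omega))

theorem eventually_mul_le_of_lt_liminf {σ ℓ : ℕ → ℝ} {c : ℝ} (hσ0 : ∀ k, 0 ≤ σ k)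
    (hσ : ∀ᶠ k in atTop, σ k ≠ 0) (hτ : ∀ᶠ k in atTop, 0 < σ k - ℓ k)
    (hc : c < liminf (fun k => σ (k - 1) / σ k / (1 - ℓ k / σ k)) atTop) :
    ∀ᶠ k in atTop, c * (σ (k + 1) - ℓ (k + 1)) ≤ σ k := by
  have hE : ∀ᶠ k in atTop, σ (k - 1) / σ k / (1 - ℓ k / σ k) = σ (k - 1) / (σ k - ℓ k) :=
    hσ.mono fun k hk => by rw [one_sub_div hk, div_div_div_cancel_right₀ hk]
  rw [liminf_congr hE] at hc
  have hlt := eventually_lt_of_lt_liminf hc <| isBoundedUnder_of_eventually_ge <|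
    hτ.mono fun k hk => div_nonneg (hσ0 _) hk.le
  filter_upwards [(tendsto_add_atTop_nat 1).eventually (hτ.and hlt)] with k ⟨hτk, hck⟩
  rw [lt_div_iff₀ hτk] at hck
  simpa using hck.le

theorem exists_lt_le_succ_of_tendsto_atTop {α : Type*} [LinearOrder α] {τ : ℕ → α}
    (hτ : Tendsto τ atTop atTop) {k₀ : ℕ} {t : α} (ht : τ k₀ < t) :
    ∃ k ≥ k₀, τ k < t ∧ t ≤ τ (k + 1) := by
  by_contra! h
  have hall : ∀ k ≥ k₀, τ k < t := fun k hk => Nat.le_induction ht (fun k hk => h k hk) k hk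
  obtain ⟨k, hkt, hk⟩ := ((hτ.eventually_ge_atTop t).and (eventually_ge_atTop k₀)).exists
  exact (hall k hk).not_ge hkt

theorem eventually_mul_le_of_staircase {f : ℝ → ℝ} {σ τ : ℕ → ℝ} {c : ℝ}
    (hτ : Tendsto τ atTop atTop) (hc : 0 ≤ c) (hcσ : ∀ᶠ k in atTop, c * τ (k + 1) ≤ σ k)
    (hf : ∀ᶠ k in atTop, ∀ t, τ k < t → σ k ≤ f t) :
    ∀ᶠ t in atTop, c * t ≤ f t := by
  obtain ⟨k₀, hk₀⟩ := eventually_atTop.1 (hcσ.and hf)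
  filter_upwards [eventually_gt_atTop (τ k₀)] with t ht
  obtain ⟨k, hk, hτk, htk⟩ := exists_lt_le_succ_of_tendsto_atTop hτ ht
  calc c * t ≤ c * τ (k + 1) := mul_le_mul_of_nonneg_left htk hc
    _ ≤ σ k := (hk₀ k hk).1
    _ ≤ f t := (hk₀ k hk).2 t hτk

theorem mdimLower_ge_of_affine_horseshoes_general (φ : unitInterval → unitInterval)
    (a : ℕ → ℝ) (hmono : StrictMono a)
    (hsup : (⨆ k, a k) = 1) (s : ℕ → ℕ) (hs2 : ∀ k, 1 ≤ k → 2 ≤ s k)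
    (haff : ∀ k, 1 ≤ k → ∀ i < s k, AffineLeg φ (a (k - 1)) (a k) (s k) i) :
    Filter.liminf (fun k : ℕ =>
        (Real.log (s (k - 1)) / Real.log (s k)) /
          (1 - Real.log (a k - a (k - 1)) / Real.log (s k))) Filter.atTop
      ≤ mdimLower dI φ := by
  obtain ⟨ha1, ha⟩ := le_and_tendsto_of_iSup_eq hmono.monotone hsup one_ne_zero
  have hσ : ∀ k, 0 ≤ Real.log (s k) := fun k => Real.log_natCast_nonneg _
  have hτ : Tendsto (fun k => Real.log (s k) - Real.log (a k - a (k - 1))) atTop atTop :=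
    tendsto_atTop_mono (fun k => by linarith [hσ k]) (tendsto_neg_log_sub_pred_atTop hmono ha)
  -- With `t = |log ε|`, the horseshoe on `I_k` separates at every scale `t > log s_k - log |I_k|`.
  refine le_mdimLower_dI (b := Real.log 2) fun c hc hcT =>
    eventually_mul_le_of_staircase (σ := fun k => Real.log (s k)) hτ hc.le ?_ ?_
  · refine eventually_mul_le_of_lt_liminf hσ ?_ (hτ.eventually_gt_atTop 0) hcT
    filter_upwards [eventually_ge_atTop 1] with k hk
    exact (Real.log_pos (by exact_mod_cast hs2 k hk)).ne'
  · have ha0 : ∀ᶠ k in atTop, 0 ≤ a (k - 1) :=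
      (ha.comp (tendsto_sub_atTop_nat 1)).eventually (eventually_ge_nhds one_pos)
    filter_upwards [eventually_ge_atTop 1, ha0] with k hk hk0 t ht
    have hL : 0 < a k - a (k - 1) := sub_pos.2 (hmono (by omega))
    have hs : (0 : ℝ) < s k := by exact_mod_cast (by linarith [hs2 k hk] : 0 < s k)
    have hε : Real.exp (-t) < (a k - a (k - 1)) / s k := by
      rw [← Real.exp_log hL, ← Real.exp_log hs, ← Real.exp_sub]
      exact Real.exp_lt_exp.2 (by linarith)
    linarith [log_sub_log_two_le_sepExp_of_affineLegs (hmono.monotone (Nat.sub_le k 1))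
      (Icc_subset_Icc hk0 (ha1 k)) (haff k hk) (Real.exp_pos _) hε]

/-- Lower bound for the lower metric mean dimension of an interval map built from a
sequence of full affine horseshoes `I_k = [a_{k-1}, a_k]` with `s_k` equal legs. -/
theorem mdimLower_ge_of_affine_horseshoes (φ : unitInterval → unitInterval)
    (hφ : Continuous φ) (a : ℕ → ℝ) (ha0 : a 0 = 0) (hmono : StrictMono a)
    (hsup : (⨆ k, a k) = 1) (s : ℕ → ℕ) (hs2 : ∀ k, 1 ≤ k → 2 ≤ s k)
    (hsmono : ∀ k, 1 ≤ k → s k ≤ s (k + 1))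
    (haff : ∀ k, 1 ≤ k → ∀ i < s k, AffineLeg φ (a (k - 1)) (a k) (s k) i) :
    Filter.liminf (fun k : ℕ =>
        (Real.log (s (k - 1)) / Real.log (s k)) /
          (1 - Real.log (a k - a (k - 1)) / Real.log (s k))) Filter.atTop
      ≤ mdimLower dI φ :=
  mdimLower_ge_of_affine_horseshoes_general φ a hmono hsup s hs2 haff
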